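/- (Core of the Wolf–Gray theorem on the canonical almost complex structure of a $3$-symmetric space.) Let $V$ be a vector space over $\mathbb{R}$ and let $\sigma : V \to V$ be a linear automorphism with $\sigma^3 = \mathrm{id}$. Define the linear map $J := \frac{1}{\sqrt{3}}(2\sigma + \mathrm{id})$. Then for every $m \in \mathrm{range}(\sigma - \mathrm{id})$ one has $J(J(m)) = -m$, and moreover $\sigma(m) = -\frac{1}{2} m + \frac{\sqrt{3}}{2} J(m)$; that is, on the subspace $\mathrm{range}(\sigma - \mathrm{id})$ the map $J$ is a complex structure and $P := \sigma|_{\mathrm{range}(\sigma - \mathrm{id})}$ satisfies $P = -\frac{1}{2}I + \frac{\sqrt{3}}{2}J$. -/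
import Mathlib


/-- Core of the Wolf–Gray theorem: if `σ ^ 3 = 1` and
`J = (1/√3) (2σ + id)`, then on `range (σ - id)` the map `J` is a complex
structure (`J² = -id`) and `σ = -(1/2)·id + (√3/2)·J` there. -/
theorem wolf_gray_complex_structure {V : Type*} [AddCommGroup V] [Module ℝ V]
    (σ : V ≃ₗ[ℝ] V) (hσ : σ ^ 3 = 1)
    (J : V →ₗ[ℝ] V)
    (hJ : J = (Real.sqrt 3)⁻¹ • ((2 : ℝ) • (σ : V →ₗ[ℝ] V) + LinearMap.id)) :
    ∀ m ∈ LinearMap.range ((σ : V →ₗ[ℝ] V) - LinearMap.id),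
      J (J m) = -m ∧ σ m = (-(1 / 2 : ℝ)) • m + (Real.sqrt 3 / 2) • J m := by
  have hs3 : Real.sqrt 3 ≠ 0 := by positivity
  have hs : (Real.sqrt 3) * (Real.sqrt 3) = 3 := Real.mul_self_sqrt (by norm_num)
  rintro m ⟨x, rfl⟩
  simp only [LinearMap.sub_apply, LinearMap.id_apply, LinearEquiv.coe_coe]
  set m := σ x - x with hm
  have key : σ (σ m) + σ m + m = 0 := by
    have h3 : σ (σ (σ x)) = x := by
      have h := congrArg (fun f : V ≃ₗ[ℝ] V => f x) hσ
      simpa [pow_succ] using h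
    simp only [hm, map_sub, h3]
    abel
  have hσm : σ (σ m) = -σ m - m := by linear_combination (norm := module) key
  constructor
  · rw [hJ]
    simp only [LinearMap.smul_apply, LinearMap.add_apply, LinearMap.id_apply,
      LinearEquiv.coe_coe, map_smul, map_add]
    rw [hσm]
    match_scalars <;> field_simp <;> nlinarith [hs]
  · rw [hJ]
    simp only [LinearMap.smul_apply, LinearMap.add_apply, LinearMap.id_apply,
      LinearEquiv.coe_coe]
    match_scalars <;> field_simp <;> nlinarith [hs]
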